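/- arXiv:math/0409608 — 6 statements merged into one kernel-verified Lean document; each statement's English description precedes it below -/
import Mathlib

section
/- Let 𝒰 be a countably incomplete ultrafilter on an infinite set W, and let (R_w, m_w) be Noetherian local rings whose maximal ideals are each generated by at most n elements. Let (R, m) be their ultraproduct. Then the separated quotient R/⋂_{k≥1} m^k is a Noetherian local ring which is complete with respect to the adic topology of its maximal ideal. -/
/-!
The ultraproduct `R` is local, and its maximal ideal `m` is generated by the classes `ξᵢ` of the
componentwise generators; membership in `m ^ k` is decided componentwise, for almost all `w`.
Countable incompleteness yields `d : W → ℕ` tending to infinity along `𝒰`, so that an `m`-adic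
Cauchy sequence `(gₖ)` has the limit `w ↦ g_{d w} w`: `R` is `m`-adically precomplete, though not
separated. Dividing by `⋂ mᵏ` preserves precompleteness and makes the ring separated, so the
separated quotient is a complete local ring with finitely generated maximal ideal.

Such a ring `A` is Noetherian. Given an ideal `J`, the leading forms of its elements span an ideal
of the Noetherian ring `(A ⧸ m)[X₁, …, Xₙ]`; lifting finitely many generators gives `uⱼ ∈ J` such
that each `z ∈ J ∩ mᵏ` agrees modulo `m ^ (k + 1)` with some `∑ cⱼ uⱼ`, where `cⱼ ∈ m ^ (k - eⱼ)`
for fixed `eⱼ`. Iterating, the coefficients converge by completeness, and `z = ∑ Lⱼ uⱼ` by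
separatedness.
-/

/-- The ideal of the product ring consisting of families that vanish almost
everywhere with respect to the ultrafilter `𝒰`. -/
def almostZero {W : Type*} (𝒰 : Ultrafilter W) (R : W → Type*) [∀ w, CommRing (R w)] :
    Ideal (∀ w, R w) where
  carrier := {f | ∀ᶠ w in (𝒰 : Filter W), f w = 0}
  zero_mem' := Filter.Eventually.of_forall fun _ => rfl
  add_mem' := by
    intro f g hf hg
    filter_upwards [hf, hg] with w h1 h2
    simp [h1, h2]
  smul_mem' := by
    intro c f hf
    filter_upwards [hf] with w h
    simp [h]

/-- The ultraproduct of a family of commutative rings with respect to an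
ultrafilter: the product modulo the ideal of almost-everywhere-zero families. -/
abbrev Ultraproduct {W : Type*} (𝒰 : Ultrafilter W) (R : W → Type*) [∀ w, CommRing (R w)] :
    Type _ :=
  (∀ w, R w) ⧸ almostZero 𝒰 R

theorem isUnit_mk_iff {W : Type*} (𝒰 : Ultrafilter W) (R : W → Type*) [∀ w, CommRing (R w)]
    (f : ∀ w, R w) :
    IsUnit (Ideal.Quotient.mk (almostZero 𝒰 R) f) ↔ ∀ᶠ w in (𝒰 : Filter W), IsUnit (f w) := by
  constructor
  · rintro ⟨u, hu⟩
    obtain ⟨g, hg⟩ := Ideal.Quotient.mk_surjective (↑u⁻¹ : Ultraproduct 𝒰 R)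
    have h1 : Ideal.Quotient.mk (almostZero 𝒰 R) (f * g) =
        Ideal.Quotient.mk (almostZero 𝒰 R) 1 := by
      rw [map_mul, map_one, hg, ← hu, Units.mul_inv]
    have h2 : f * g - 1 ∈ almostZero 𝒰 R := Ideal.Quotient.eq.mp h1
    filter_upwards [h2] with w hw
    have : f w * g w = 1 := by
      have : f w * g w - 1 = 0 := hw
      linear_combination this
    exact IsUnit.of_mul_eq_one _ this
  · intro hf
    classical
    set g : ∀ w, R w := fun w => if h : IsUnit (f w) then ((h.unit⁻¹ : (R w)ˣ) : R w) else 0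
      with hgdef
    have h1 : f * g - 1 ∈ almostZero 𝒰 R := by
      filter_upwards [hf] with w hw
      have : f w * g w = 1 := by
        simp only [hgdef, dif_pos hw]
        exact hw.mul_val_inv
      show f w * g w - 1 = 0
      rw [this, sub_self]
    have h2 : Ideal.Quotient.mk (almostZero 𝒰 R) f *
        Ideal.Quotient.mk (almostZero 𝒰 R) g = 1 := by
      rw [← map_mul, ← map_one (Ideal.Quotient.mk (almostZero 𝒰 R))]
      exact Ideal.Quotient.eq.mpr h1
    exact IsUnit.of_mul_eq_one _ h2

instance {W : Type*} (𝒰 : Ultrafilter W) (R : W → Type*) [∀ w, CommRing (R w)]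
    [∀ w, Nontrivial (R w)] : Nontrivial (Ultraproduct 𝒰 R) := by
  refine ⟨0, 1, fun h => ?_⟩
  have h1 : (0 : ∀ w, R w) - 1 ∈ almostZero 𝒰 R := Ideal.Quotient.eq.mp h
  have h2 : ∀ᶠ w in (𝒰 : Filter W), (0 : R w) - 1 = 0 := h1
  obtain ⟨w, hw⟩ := h2.exists
  exact one_ne_zero (by linear_combination -hw)

instance {W : Type*} (𝒰 : Ultrafilter W) (R : W → Type*) [∀ w, CommRing (R w)]
    [∀ w, IsLocalRing (R w)] : IsLocalRing (Ultraproduct 𝒰 R) := by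
  refine IsLocalRing.of_nonunits_add ?_
  intro a b ha hb
  obtain ⟨f, rfl⟩ := Ideal.Quotient.mk_surjective a
  obtain ⟨g, rfl⟩ := Ideal.Quotient.mk_surjective b
  rw [mem_nonunits_iff, isUnit_mk_iff, ← Ultrafilter.eventually_not] at ha hb
  rw [mem_nonunits_iff, ← map_add, isUnit_mk_iff, ← Ultrafilter.eventually_not]
  filter_upwards [ha, hb] with w h1 h2
  exact fun h => (IsLocalRing.nonunits_add h1 h2) h

/-- The ideal of infinitesimals of a local ring: the intersection of all powers
of the maximal ideal. -/
def infinitesimals (A : Type*) [CommRing A] [IsLocalRing A] : Ideal A :=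
  ⨅ n : ℕ, IsLocalRing.maximalIdeal A ^ (n + 1)

open Ideal Finset MvPolynomial
open scoped Pointwise

namespace MvPolynomial

variable {R σ : Type*} [CommSemiring R]

attribute [local instance] MvPolynomial.gradedAlgebra in
theorem homogeneousComponent_mul_of_isHomogeneous {G : MvPolynomial σ R} {e : ℕ}
    (hG : G.IsHomogeneous e) (H : MvPolynomial σ R) (k : ℕ) :
    homogeneousComponent k (H * G) =
      if e ≤ k then homogeneousComponent (k - e) H * G else 0 := by
  have := DirectSum.coe_decompose_mul_of_right_mem (homogeneousSubmodule σ R) k (a := H) hG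
  erw [decomposition.decompose'_apply, decomposition.decompose'_apply] at this
  exact this

end MvPolynomial

section LeadingForms

variable {A ι : Type*} [CommRing A] (x : ι → A)

local notation "I" => Ideal.span (Set.range x)

theorem eval_mem_span_pow_succ_of_coeff_mem {F : MvPolynomial ι A} {k : ℕ}
    (hF : F.IsHomogeneous k) (hcoeff : ∀ d, F.coeff d ∈ I) : eval x F ∈ I ^ (k + 1) := by
  rw [F.as_sum, map_sum, pow_succ']
  refine Ideal.sum_mem _ fun d hd => ?_
  rw [eval_monomial]
  refine Ideal.mul_mem_mul (hcoeff d) ((mem_span_pow_iff_exists_isHomogeneous x _).2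
    ⟨monomial d 1, isHomogeneous_monomial _ ?_, by simp [eval_monomial]⟩)
  rw [Finsupp.degree_eq_weight_one]
  exact hF (mem_support_iff.mp hd)

/-- Lift a relation `G ≡ ∑ Hⱼ Fⱼ` from `(A ⧸ I)[X]` to `A[X]` and keep only its degree-`k` part:
the defect is a form of degree `k` with coefficients in `I`, whose value lies in `I ^ (k + 1)`. -/
theorem exists_eval_sub_sum_mul_mem_pow_succ {τ : Type*} [Fintype τ]
    {F : τ → MvPolynomial ι A} {d : τ → ℕ} (hF : ∀ j, (F j).IsHomogeneous (d j))
    {u : τ → A} (hu : ∀ j, eval x (F j) - u j ∈ I ^ (d j + 1))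
    {G : MvPolynomial ι A} {k : ℕ} (hG : G.IsHomogeneous k)
    (hspan : G.map (Ideal.Quotient.mk I) ∈
      span (Set.range fun j => (F j).map (Ideal.Quotient.mk I))) :
    ∃ c : τ → A, (∀ j, c j ∈ I ^ (k - d j)) ∧ eval x G - ∑ j, c j * u j ∈ I ^ (k + 1) := by
  obtain ⟨Hbar, hHbar⟩ := (Submodule.mem_span_range_iff_exists_fun _).mp hspan
  choose H hH using fun j => map_surjective _ Ideal.Quotient.mk_surjective (Hbar j)
  let H' (j : τ) : MvPolynomial ι A :=
    if d j ≤ k then homogeneousComponent (k - d j) (H j) else 0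
  have hcomp (j) : homogeneousComponent k (H j * F j) = H' j * F j := by
    by_cases h : d j ≤ k <;> simp [homogeneousComponent_mul_of_isHomogeneous (hF j), H', h]
  have hc (j) : eval x (H' j) ∈ I ^ (k - d j) := by
    refine (mem_span_pow_iff_exists_isHomogeneous x _).2 ⟨H' j, ?_, rfl⟩
    by_cases h : d j ≤ k
    · simpa [H', h] using homogeneousComponent_isHomogeneous _ _
    · simpa [H', h] using isHomogeneous_zero _ _ (k - d j)
  let P := G - ∑ j, H j * F j
  have hP : P.map (Ideal.Quotient.mk I) = 0 := by
    simp only [P, map_sub, map_sum, map_mul, hH, ← hHbar, smul_eq_mul, sub_self]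
  have hPk : eval x (homogeneousComponent k P) ∈ I ^ (k + 1) := by
    refine eval_mem_span_pow_succ_of_coeff_mem x (homogeneousComponent_isHomogeneous k P)
      fun e => ?_
    rw [coeff_homogeneousComponent]
    split_ifs
    · rw [← Ideal.Quotient.eq_zero_iff_mem, ← coeff_map, hP, coeff_zero]
    · exact zero_mem _
  refine ⟨fun j => eval x (H' j), hc, ?_⟩
  have hsplit : eval x G - ∑ j, eval x (H' j) * u j =
      eval x (homogeneousComponent k P) + ∑ j, eval x (H' j) * (eval x (F j) - u j) := by
    simp only [P, map_sub, map_sum, hcomp, homogeneousComponent_eq_self hG, map_mul, mul_sub,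
      sum_sub_distrib]
    ring
  rw [hsplit]
  refine add_mem hPk (sum_mem _ fun j _ => ?_)
  have := mul_mem_mul (hc j) (hu j)
  rw [← pow_add] at this
  exact pow_le_pow_right (by omega) this

end LeadingForms

section AdicComplete

variable {A : Type*} [CommRing A] {I : Ideal A}

theorem IsPrecomplete.exists_sum_range_sub_mem [IsPrecomplete I A] {c : ℕ → A} {D : ℕ}
    (hc : ∀ i, c i ∈ I ^ (i - D)) : ∃ L, ∀ N, ∑ i ∈ range (N + D), c i - L ∈ I ^ N := by
  have hcauchy {m n : ℕ} (hmn : m ≤ n) : ∑ i ∈ range (m + D), c i ≡ ∑ i ∈ range (n + D), c i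
      [SMOD (I ^ m • ⊤ : Submodule A A)] := by
    obtain ⟨r, rfl⟩ := Nat.exists_eq_add_of_le hmn
    rw [SModEq.sub_mem, smul_eq_mul, mul_top, add_right_comm, sum_range_add _ (m + D) r,
      sub_add_cancel_left, neg_mem_iff]
    exact sum_mem _ fun i _ => pow_le_pow_right (by omega) (hc _)
  obtain ⟨L, hL⟩ := IsPrecomplete.prec ‹_› hcauchy
  exact ⟨L, fun N => by simpa [SModEq.sub_mem, smul_eq_mul, mul_top] using hL N⟩

theorem le_span_range_of_isAdicComplete [IsAdicComplete I A] {τ : Type*} [Fintype τ]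
    {J : Ideal A} {u : τ → A} (hu : ∀ j, u j ∈ J) (D : ℕ)
    (hstep : ∀ k, ∀ z ∈ J, z ∈ I ^ k →
      ∃ c : τ → A, (∀ j, c j ∈ I ^ (k - D)) ∧ z - ∑ j, c j * u j ∈ I ^ (k + 1)) :
    J ≤ span (Set.range u) := by
  intro z hz
  -- hypotheses moved inside the existential, so that `choose` gives a function of `k` and `y`
  have hstep' (k : ℕ) (y : A) : ∃ c : τ → A, y ∈ J ∧ y ∈ I ^ k →
      (∀ j, c j ∈ I ^ (k - D)) ∧ y - ∑ j, c j * u j ∈ I ^ (k + 1) := by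
    by_cases hy : y ∈ J ∧ y ∈ I ^ k
    · obtain ⟨c, hc⟩ := hstep k y hy.1 hy.2
      exact ⟨c, fun _ => hc⟩
    · exact ⟨0, fun h => absurd h hy⟩
  choose c hc using hstep'
  let Z : ℕ → A := fun k => Nat.rec z (fun k y => y - ∑ j, c k y j * u j) k
  have hZ (k : ℕ) : Z k ∈ J ∧ Z k ∈ I ^ k := by
    induction k with
    | zero => exact ⟨hz, by simp⟩
    | succ k ih =>
      exact ⟨sub_mem ih.1 (sum_mem _ fun j _ => mul_mem_left _ _ (hu j)), (hc k _ ih).2⟩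
  have hZ_eq (N : ℕ) : Z N = z - ∑ j, (∑ i ∈ range N, c i (Z i) j) * u j := by
    induction N with
    | zero => simp [Z]
    | succ N ih =>
      change Z N - _ = _
      simp only [sum_range_succ, add_mul, sum_add_distrib]
      linear_combination ih
  choose L hL using fun j =>
    IsPrecomplete.exists_sum_range_sub_mem (c := fun i => c i (Z i) j) (D := D)
      fun i => (hc i _ (hZ i)).1 j
  suffices z = ∑ j, L j * u j from
    this ▸ sum_mem _ fun j _ => mul_mem_left _ _ (subset_span ⟨j, rfl⟩)
  rw [← sub_eq_zero]
  refine IsHausdorff.haus (inferInstance : IsHausdorff I A) _ fun N => ?_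
  rw [SModEq.zero, smul_eq_mul, mul_top]
  have hsplit : z - ∑ j, L j * u j =
      Z (N + D) + ∑ j, (∑ i ∈ range (N + D), c i (Z i) j - L j) * u j := by
    rw [hZ_eq (N + D)]
    simp only [sub_mul, sum_sub_distrib]
    ring
  rw [hsplit]
  exact add_mem (pow_le_pow_right (by omega) (hZ _).2)
    (sum_mem _ fun j _ => mul_mem_right _ _ (hL j N))

end AdicComplete

section Noetherian

variable {A ι : Type*} [CommRing A]

/-- Representatives in `(A ⧸ I)[X]`, `I = span (range x)`, of the initial forms in the associated
graded ring of `I` of the elements of `J`. -/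
def leadingForms (x : ι → A) (J : Ideal A) : Set (MvPolynomial ι (A ⧸ span (Set.range x))) :=
  {G | ∃ (k : ℕ) (F : MvPolynomial ι A), F.IsHomogeneous k ∧ F.map (Ideal.Quotient.mk _) = G ∧
    ∃ u ∈ J, eval x F - u ∈ span (Set.range x) ^ (k + 1)}

theorem isNoetherianRing_of_isAdicComplete (I : Ideal A) [IsAdicComplete I A] (hI : I.FG)
    [IsNoetherianRing (A ⧸ I)] : IsNoetherianRing A := by
  obtain ⟨n, x, rfl⟩ := Submodule.fg_iff_exists_fin_generating_family.mp hI
  refine (isNoetherianRing_iff_ideal_fg A).2 fun J => ?_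
  obtain ⟨t, ht, hspan⟩ := (Submodule.fg_span_iff_fg_span_finset_subset (leadingForms x J)).1
    (IsNoetherian.noetherian (R := MvPolynomial (Fin n) (A ⧸ span (Set.range x))) _)
  choose d F hF hFmap u hu hFu using fun G : t => ht G.2
  have hJ : J ≤ span (Set.range u) := by
    refine le_span_range_of_isAdicComplete (I := span (Set.range x)) hu (univ.sup d)
      fun k z hz hzk => ?_
    obtain ⟨G, hG, rfl⟩ := (mem_span_pow_iff_exists_isHomogeneous x _).1 hzk
    have hGspan : G.map (Ideal.Quotient.mk _) ∈
        span (Set.range fun j => (F j).map (Ideal.Quotient.mk (span (Set.range x)))) := by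
      simp only [hFmap, Subtype.range_coe_subtype, Finset.setOfPred_mem]
      change _ ∈ Submodule.span _ _
      rw [← hspan]
      exact subset_span ⟨k, G, hG, rfl, _, hz, by simp⟩
    obtain ⟨c, hc, hcu⟩ := exists_eval_sub_sum_mul_mem_pow_succ x hF hFu hG hGspan
    refine ⟨c, fun j => pow_le_pow_right ?_ (hc j), hcu⟩
    have := le_sup (f := d) (mem_univ j)
    omega
  rw [le_antisymm hJ (span_le.2 (Set.range_subset_iff.2 hu))]
  exact Submodule.fg_span (Set.finite_range u)

end Noetherian

section SeparatedQuotient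

variable {A : Type*} [CommRing A] {I J : Ideal A}

theorem mk_mem_map_pow_iff_of_eq_iInf (hJ : J = ⨅ k, I ^ k) {a : A} {k : ℕ} :
    Ideal.Quotient.mk J a ∈ I.map (Ideal.Quotient.mk J) ^ k ↔ a ∈ I ^ k := by
  subst hJ
  rw [← Ideal.map_pow, ← mem_comap, comap_map_of_surjective' _ Ideal.Quotient.mk_surjective,
    mk_ker, sup_eq_left.2 (iInf_le _ k)]

theorem mk_sModEq_mk_iff_of_eq_iInf (hJ : J = ⨅ k, I ^ k) {a b : A} {k : ℕ} :
    Ideal.Quotient.mk J a ≡ Ideal.Quotient.mk J b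
        [SMOD (I.map (Ideal.Quotient.mk J) ^ k • ⊤ : Submodule (A ⧸ J) (A ⧸ J))] ↔
      a ≡ b [SMOD (I ^ k • ⊤ : Submodule A A)] := by
  simp only [SModEq.sub_mem, smul_eq_mul, mul_top, ← map_sub, mk_mem_map_pow_iff_of_eq_iInf hJ]

theorem isHausdorff_map_mk_of_eq_iInf (hJ : J = ⨅ k, I ^ k) :
    IsHausdorff (I.map (Ideal.Quotient.mk J)) (A ⧸ J) := by
  refine ⟨fun a ha => ?_⟩
  obtain ⟨a, rfl⟩ := Ideal.Quotient.mk_surjective a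
  rw [Ideal.Quotient.eq_zero_iff_mem, hJ, mem_iInf]
  intro k
  have := ha k
  rw [← map_zero (Ideal.Quotient.mk J), mk_sModEq_mk_iff_of_eq_iInf hJ, SModEq.zero, smul_eq_mul,
    mul_top] at this
  exact this

theorem isPrecomplete_map_mk_of_eq_iInf [IsPrecomplete I A] (hJ : J = ⨅ k, I ^ k) :
    IsPrecomplete (I.map (Ideal.Quotient.mk J)) (A ⧸ J) := by
  refine ⟨fun f hf => ?_⟩
  choose g hg using fun k => Ideal.Quotient.mk_surjective (f k)
  obtain rfl : f = fun k => Ideal.Quotient.mk J (g k) := funext fun k => (hg k).symm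
  obtain ⟨L, hL⟩ := IsPrecomplete.prec ‹_› fun hmn => (mk_sModEq_mk_iff_of_eq_iInf hJ).1 (hf hmn)
  exact ⟨Ideal.Quotient.mk J L, fun k => (mk_sModEq_mk_iff_of_eq_iInf hJ).2 (hL k)⟩

end SeparatedQuotient

section Infinitesimals

open IsLocalRing

variable {A : Type*} [CommRing A] [IsLocalRing A]

theorem infinitesimals_eq_iInf_pow : infinitesimals A = ⨅ k, maximalIdeal A ^ k := by
  refine le_antisymm (le_iInf fun k => ?_) (le_iInf fun k => iInf_le _ (k + 1))
  rcases k with _ | k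
  · simp
  · exact iInf_le _ k

instance : IsLocalRing (A ⧸ infinitesimals A) :=
  have : Nontrivial (A ⧸ infinitesimals A) := Ideal.Quotient.nontrivial_iff.2 <|
    ne_top_of_le_ne_top (maximalIdeal.isMaximal A).ne_top ((iInf_le _ 0).trans (pow_one _).le)
  .of_surjective' _ Ideal.Quotient.mk_surjective

theorem maximalIdeal_quotient_infinitesimals :
    maximalIdeal (A ⧸ infinitesimals A) = (maximalIdeal A).map (Ideal.Quotient.mk _) :=
  (map_maximalIdeal_of_surjective _ Ideal.Quotient.mk_surjective).symm

theorem isAdicComplete_quotient_infinitesimals [IsPrecomplete (maximalIdeal A) A] :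
    IsAdicComplete (maximalIdeal (A ⧸ infinitesimals A)) (A ⧸ infinitesimals A) := by
  rw [maximalIdeal_quotient_infinitesimals]
  exact { isHausdorff_map_mk_of_eq_iInf infinitesimals_eq_iInf_pow,
    isPrecomplete_map_mk_of_eq_iInf infinitesimals_eq_iInf_pow with }

theorem isNoetherianRing_quotient_infinitesimals [IsPrecomplete (maximalIdeal A) A]
    (hfg : (maximalIdeal A).FG) : IsNoetherianRing (A ⧸ infinitesimals A) := by
  have := isAdicComplete_quotient_infinitesimals (A := A)
  let := Ideal.Quotient.field (maximalIdeal (A ⧸ infinitesimals A))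
  refine isNoetherianRing_of_isAdicComplete (maximalIdeal _) ?_
  rw [maximalIdeal_quotient_infinitesimals]
  exact hfg.map _

end Infinitesimals

theorem Set.range_pow_eq_range_prod {A ι : Type*} [CommMonoid A] (v : ι → A) (k : ℕ) :
    Set.range v ^ k = Set.range fun e : Fin k → ι => ∏ j, v (e j) := by
  ext a
  simp only [Set.mem_pow_iff_prod, Set.mem_range]
  constructor
  · rintro ⟨f, hf, rfl⟩
    choose e he using hf
    exact ⟨e, by simp [he]⟩
  · rintro ⟨e, rfl⟩
    exact ⟨_, fun j => ⟨e j, rfl⟩, rfl⟩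

theorem Ideal.span_range_pow {A ι : Type*} [CommRing A] (v : ι → A) (k : ℕ) :
    span (Set.range v) ^ k = span (Set.range fun e : Fin k → ι => ∏ j, v (e j)) := by
  rw [← Set.range_pow_eq_range_prod]
  exact Submodule.span_pow _ k

theorem Ideal.sub_mem_pow_of_forall_succ_sub_mem {A : Type*} [CommRing A] (I : Ideal A)
    {g : ℕ → A} {k N : ℕ} (hkN : k ≤ N) (h : ∀ i, k ≤ i → i < N → g (i + 1) - g i ∈ I ^ i) :
    g N - g k ∈ I ^ k := by
  induction N, hkN using Nat.le_induction with
  | base => simp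
  | succ N hkN ih =>
    rw [← sub_add_sub_cancel]
    exact add_mem (pow_le_pow_right hkN (h N hkN N.lt_succ_self))
      (ih fun i hki hiN => h i hki (hiN.trans N.lt_succ_self))

theorem Ultrafilter.exists_eventually_lt_forall_lt_mem {W : Type*} {𝒰 : Ultrafilter W}
    (hcc : ∃ s : ℕ → Set W, (∀ n, s n ∈ 𝒰) ∧ (⋂ n, s n) = ∅) {P : ℕ → Set W}
    (hP : ∀ i, P i ∈ 𝒰) :
    ∃ d : W → ℕ, ∀ k, ∀ᶠ w in (𝒰 : Filter W), k < d w ∧ ∀ i < d w, w ∈ P i := by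
  classical
  obtain ⟨s, hs, hempty⟩ := hcc
  have hex (w : W) : ∃ i, w ∉ P i ∩ s i := by
    by_contra! h
    have : w ∈ ⋂ n, s n := Set.mem_iInter.2 fun n => (h n).2
    simp [hempty] at this
  refine ⟨fun w => Nat.find (hex w), fun k => ?_⟩
  have hfin : ∀ᶠ w in (𝒰 : Filter W), ∀ i ∈ Set.Iic k, w ∈ P i ∩ s i :=
    (Filter.eventually_all_finite (Set.finite_Iic k)).2 fun i _ => Filter.inter_mem (hP i) (hs i)
  filter_upwards [hfin] with w hw
  refine ⟨Nat.lt_find_iff _ _ |>.2 fun i hi => not_not.2 (hw i hi), fun i hi => ?_⟩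
  exact (not_not.1 (Nat.find_min (hex w) hi)).1

namespace Ultraproduct

variable {W : Type*} (𝒰 : Ultrafilter W) {R : W → Type*} [∀ w, CommRing (R w)]

local notation "π" => Ideal.Quotient.mk (almostZero 𝒰 R)

theorem mk_eq_mk_iff {f g : ∀ w, R w} : π f = π g ↔ ∀ᶠ w in (𝒰 : Filter W), f w = g w :=
  Ideal.Quotient.eq.trans <| Filter.eventually_congr <| .of_forall fun _ => sub_eq_zero

theorem mk_mem_span_range_iff {ι : Type*} [Fintype ι] (x : ∀ w, ι → R w) (f : ∀ w, R w) :
    π f ∈ span (Set.range fun i => π fun w => x w i) ↔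
      ∀ᶠ w in (𝒰 : Filter W), f w ∈ span (Set.range (x w)) := by
  simp only [Submodule.mem_span_range_iff_exists_fun, smul_eq_mul]
  constructor
  · rintro ⟨c, hc⟩
    choose g hg using fun i => Ideal.Quotient.mk_surjective (c i)
    have : π (∑ i, g i * fun w => x w i) = π f := by simp [hg, hc]
    filter_upwards [(mk_eq_mk_iff 𝒰).1 this] with w hw
    exact ⟨fun i => g i w, by simpa using hw⟩
  · intro h
    obtain ⟨c, hc⟩ := Filter.skolem.1 h
    refine ⟨fun i => π fun w => c w i, ?_⟩
    have : π (∑ i, (fun w => c w i) * fun w => x w i) = π f := by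
      refine (mk_eq_mk_iff 𝒰).2 ?_
      filter_upwards [hc] with w hw
      simpa using hw
    simpa using this

theorem mk_mem_span_range_pow_iff {ι : Type*} [Fintype ι] (x : ∀ w, ι → R w) (k : ℕ)
    (f : ∀ w, R w) :
    π f ∈ span (Set.range fun i => π fun w => x w i) ^ k ↔
      ∀ᶠ w in (𝒰 : Filter W), f w ∈ span (Set.range (x w)) ^ k := by
  have hprod : (fun e : Fin k → ι => ∏ j, π fun w => x w (e j)) =
      fun e => π fun w => ∏ j, x w (e j) := by
    ext e
    rw [← map_prod]
    congr 1
    ext w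
    simp
  rw [span_range_pow, hprod]
  simp only [span_range_pow]
  exact mk_mem_span_range_iff 𝒰 (ι := Fin k → ι) (fun w e => ∏ j, x w (e j)) f

theorem maximalIdeal_eq_span_range [∀ w, IsLocalRing (R w)] {ι : Type*} [Fintype ι]
    (x : ∀ w, ι → R w) (hx : ∀ w, span (Set.range (x w)) = IsLocalRing.maximalIdeal (R w)) :
    IsLocalRing.maximalIdeal (Ultraproduct 𝒰 R) =
      span (Set.range fun i => π fun w => x w i) := by
  ext a
  obtain ⟨f, rfl⟩ := Ideal.Quotient.mk_surjective a
  simp only [IsLocalRing.mem_maximalIdeal, mem_nonunits_iff, isUnit_mk_iff,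
    ← Ultrafilter.eventually_not, mk_mem_span_range_iff, hx]

theorem isPrecomplete_span_range (hcc : ∃ s : ℕ → Set W, (∀ n, s n ∈ 𝒰) ∧ (⋂ n, s n) = ∅)
    {ι : Type*} [Fintype ι] (x : ∀ w, ι → R w) :
    IsPrecomplete (span (Set.range fun i => π fun w => x w i)) (Ultraproduct 𝒰 R) := by
  refine ⟨fun a ha => ?_⟩
  choose g hg using fun k => Ideal.Quotient.mk_surjective (a k)
  have hstep (i : ℕ) :
      ∀ᶠ w in (𝒰 : Filter W), g (i + 1) w - g i w ∈ span (Set.range (x w)) ^ i := by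
    have := (ha i.le_succ).symm
    rw [SModEq.sub_mem, smul_eq_mul, mul_top, ← hg, ← hg, ← map_sub,
      mk_mem_span_range_pow_iff] at this
    exact this
  obtain ⟨d, hd⟩ := Ultrafilter.exists_eventually_lt_forall_lt_mem hcc hstep
  refine ⟨π fun w => g (d w) w, fun k => ?_⟩
  rw [SModEq.sub_mem, smul_eq_mul, mul_top, ← hg, ← map_sub, mk_mem_span_range_pow_iff]
  filter_upwards [hd k] with w ⟨hk, hw⟩
  rw [Pi.sub_apply, ← neg_mem_iff, neg_sub]
  exact sub_mem_pow_of_forall_succ_sub_mem _ (g := fun i => g i w) hk.le fun i _ hi => hw i hi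

end Ultraproduct

set_option synthInstance.maxHeartbeats 1000000 in
theorem stmt_4_general {W : Type*} (𝒰 : Ultrafilter W)
    (hcc : ∃ s : ℕ → Set W, (∀ n, s n ∈ 𝒰) ∧ (⋂ n, s n) = ∅)
    (R : W → Type*) [∀ w, CommRing (R w)] [∀ w, IsLocalRing (R w)]
    (n : ℕ)
    (hgen : ∀ w, ∃ x : Fin n → R w,
      Ideal.span (Set.range x) = IsLocalRing.maximalIdeal (R w)) :
    ∃ h : IsLocalRing (Ultraproduct 𝒰 R ⧸ infinitesimals (Ultraproduct 𝒰 R)),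
      IsNoetherianRing (Ultraproduct 𝒰 R ⧸ infinitesimals (Ultraproduct 𝒰 R)) ∧
      IsAdicComplete (@IsLocalRing.maximalIdeal _ _ h)
        (Ultraproduct 𝒰 R ⧸ infinitesimals (Ultraproduct 𝒰 R)) := by
  choose x hx using hgen
  have hM := Ultraproduct.maximalIdeal_eq_span_range 𝒰 x hx
  have : IsPrecomplete (IsLocalRing.maximalIdeal (Ultraproduct 𝒰 R)) (Ultraproduct 𝒰 R) :=
    hM ▸ Ultraproduct.isPrecomplete_span_range 𝒰 hcc x
  exact ⟨inferInstance,
    isNoetherianRing_quotient_infinitesimals (hM ▸ Submodule.fg_span (Set.finite_range _)),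
    isAdicComplete_quotient_infinitesimals⟩

set_option synthInstance.maxHeartbeats 1000000 in
/-- The separated quotient of an ultraproduct of Noetherian local rings of
bounded embedding dimension is a complete Noetherian local ring. -/
theorem stmt_4 {W : Type*} [Infinite W] (𝒰 : Ultrafilter W)
    (hcc : ∃ s : ℕ → Set W, (∀ n, s n ∈ 𝒰) ∧ (⋂ n, s n) = ∅)
    (R : W → Type*) [∀ w, CommRing (R w)] [∀ w, IsLocalRing (R w)]
    [∀ w, IsNoetherianRing (R w)] (n : ℕ)
    (hgen : ∀ w, ∃ x : Fin n → R w,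
      Ideal.span (Set.range x) = IsLocalRing.maximalIdeal (R w)) :
    ∃ h : IsLocalRing (Ultraproduct 𝒰 R ⧸ infinitesimals (Ultraproduct 𝒰 R)),
      IsNoetherianRing (Ultraproduct 𝒰 R ⧸ infinitesimals (Ultraproduct 𝒰 R)) ∧
      IsAdicComplete (@IsLocalRing.maximalIdeal _ _ h)
        (Ultraproduct 𝒰 R ⧸ infinitesimals (Ultraproduct 𝒰 R)) :=
  stmt_4_general 𝒰 hcc R n hgen
end

section
/- Let (R, m) be a local ring whose separated quotient R/⋂_{n≥1} mⁿ is Noetherian. Then for every ideal I of R, the m-adic closure of I equals I + ⋂_{n≥1} mⁿ; that is, ⋂_{n≥1} (I + mⁿ) = I + ⋂_{n≥1} mⁿ. -/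
open IsLocalRing

theorem isNoetherianRing_quotient_of_le {R : Type*} [CommRing R] {J K : Ideal R} (h : J ≤ K)
    [IsNoetherianRing (R ⧸ J)] : IsNoetherianRing (R ⧸ K) :=
  isNoetherianRing_of_surjective _ _ (Ideal.Quotient.factor h) (Ideal.Quotient.factor_surjective h)

namespace Ideal

theorem iInf_sup_pow_eq_of_le_jacobson {R : Type*} [CommRing R] {K J : Ideal R}
    [IsNoetherianRing (R ⧸ K)] (hJ : J ≤ K.jacobson) : ⨅ n : ℕ, K ⊔ J ^ n = K := by
  have hJ' : J.map (Quotient.mk K) ≤ jacobson ⊥ := by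
    rw [← map_quotient_self K, ← map_jacobson_of_surjective Quotient.mk_surjective mk_ker.le]
    exact map_mono hJ
  have hKrull := iInf_pow_smul_eq_bot_of_le_jacobson (M := R ⧸ K) _ hJ'
  refine le_antisymm (fun x hx => ?_) (le_iInf fun _ => le_sup_left)
  rw [← Quotient.eq_zero_iff_mem, ← Submodule.mem_bot (R := R ⧸ K), ← hKrull,
    Submodule.mem_iInf]
  intro n
  rw [smul_eq_mul, mul_top, ← Ideal.map_pow, mem_quotient_iff_mem_sup, sup_comm]
  exact mem_iInf.mp hx n

end Ideal

/-- If the separated quotient of a local ring is Noetherian, then the `m`-adic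
closure of any ideal `I` equals `I + Inf(R)`. -/
theorem stmt_5 {R : Type*} [CommRing R] [IsLocalRing R]
    (hN : IsNoetherianRing (R ⧸ infinitesimals R)) (I : Ideal R) :
    (⨅ n : ℕ, I + IsLocalRing.maximalIdeal R ^ (n + 1)) = I + infinitesimals R := by
  set K := I + infinitesimals R
  have : IsNoetherianRing (R ⧸ K) := isNoetherianRing_quotient_of_le le_sup_right
  refine le_antisymm ?_ (le_iInf fun n => sup_le_sup_left (iInf_le _ n) I)
  calc ⨅ n : ℕ, I + maximalIdeal R ^ (n + 1)
      ≤ ⨅ n : ℕ, K ⊔ maximalIdeal R ^ n :=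
        le_iInf fun n => iInf_le_of_le n <|
          sup_le_sup le_sup_left (Ideal.pow_le_pow_right n.le_succ)
    _ = K := Ideal.iInf_sup_pow_eq_of_le_jacobson (maximalIdeal_le_jacobson K)
end

section
/- Let p be a prime number, R a commutative ring of characteristic p (i.e. p·1 = 0 in R), S a commutative R-algebra, φ : S → R an R-module homomorphism, and set c := φ(1). Let I be an ideal of R and z ∈ R an element whose image under the structure homomorphism R → S lies in the extended ideal I·S. Then for every e ≥ 0, the element c · z^{p^e} lies in the ideal of R generated by the set { a^{p^e} : a ∈ I }. -/
/-- Frobenius pushed through a solidity map: if `R` has characteristic `p`,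
`φ : S → R` is `R`-linear with `c = φ 1`, and the image of `z` lies in `I·S`,
then `c * z ^ (p ^ e)` lies in the `p ^ e`-th Frobenius power of `I`. -/
theorem stmt_6 {R S : Type*} [CommRing R] [CommRing S] [Algebra R S]
    (p : ℕ) (hp : p.Prime) (hchar : (p : R) = 0)
    (φ : S →ₗ[R] R) (c : R) (hc : c = φ 1)
    (I : Ideal R) (z : R)
    (hz : algebraMap R S z ∈ Ideal.map (algebraMap R S) I)
    (e : ℕ) :
    c * z ^ p ^ e ∈ Ideal.span ((fun a => a ^ p ^ e) '' (I : Set R)) := by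
  set q := p ^ e with hq
  set J : Ideal R := Ideal.span ((fun a => a ^ q) '' (I : Set R)) with hJ
  by_cases hS : Subsingleton S
  · have h1 : (1 : S) = 0 := Subsingleton.elim _ _
    have : c = 0 := by rw [hc, h1, map_zero]
    rw [this, zero_mul]; exact J.zero_mem
  · have : Nontrivial S := not_subsingleton_iff_nontrivial.mp hS
    have hpS : (p : S) = 0 := by
      rw [← map_natCast (algebraMap R S) p, hchar, map_zero]
    have hcharS : CharP S p := by
      have hdvd : ringChar S ∣ p := ringChar.dvd hpS
      rcases (Nat.Prime.eq_one_or_self_of_dvd hp _ hdvd) with h | h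
      · exact absurd h (CharP.ringChar_ne_one)
      · rw [← h]; exact ringChar.charP S
    haveI : Fact p.Prime := ⟨hp⟩
    -- Step 1: (algebraMap R S z) ^ q ∈ Ideal.map (algebraMap R S) J
    have key : (algebraMap R S z) ^ q ∈ Ideal.map (algebraMap R S) J := by
      have := hz
      rw [Ideal.map, Ideal.span] at this
      refine Submodule.span_induction
        (p := fun x _ => x ^ q ∈ Ideal.map (algebraMap R S) J)
        ?_ ?_ ?_ ?_ this
      · rintro x ⟨a, ha, rfl⟩
        rw [← map_pow]
        exact Ideal.mem_map_of_mem _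
          (Ideal.subset_span ⟨a, ha, rfl⟩)
      · show (0:S) ^ q ∈ Ideal.map (algebraMap R S) J
        rw [zero_pow (pow_ne_zero e hp.ne_zero)]; exact Ideal.zero_mem _
      · intro x y _ _ hx hy
        show (x + y) ^ q ∈ Ideal.map (algebraMap R S) J
        rw [add_pow_char_pow]
        exact Ideal.add_mem _ hx hy
      · intro s x _ hx
        show (s • x) ^ q ∈ Ideal.map (algebraMap R S) J
        rw [smul_eq_mul, mul_pow]
        exact Ideal.mul_mem_left _ _ hx
    -- Step 2: apply φ
    have key2 : ∀ y ∈ Ideal.map (algebraMap R S) J, ∀ s : S, φ (s * y) ∈ J := by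
      intro y hy
      rw [Ideal.map, Ideal.span] at hy
      refine Submodule.span_induction
        (p := fun y _ => ∀ s : S, φ (s * y) ∈ J) ?_ ?_ ?_ ?_ hy
      · rintro x ⟨a, ha, rfl⟩ s
        have : s * algebraMap R S a = a • s := by
          rw [Algebra.smul_def]; ring
        rw [this, map_smul, smul_eq_mul]
        exact Ideal.mul_mem_right _ _ ha
      · intro s; show φ (s * 0) ∈ J; rw [mul_zero, map_zero]; exact J.zero_mem
      · intro x y _ _ hx hy s
        show φ (s * (x + y)) ∈ J
        rw [mul_add, map_add]
        exact J.add_mem (hx s) (hy s)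
      · intro t x _ hx s
        show φ (s * (t • x)) ∈ J
        rw [smul_eq_mul, ← mul_assoc]
        exact hx (s * t)
    have := key2 _ key 1
    rw [one_mul, ← map_pow] at this
    have heq : (algebraMap R S) (z ^ q) = (z ^ q) • (1 : S) := by
      rw [Algebra.smul_def, mul_one]
    rw [heq, map_smul, smul_eq_mul, ← hc, mul_comm] at this
    exact this
end

section
/- Let (R, m) be a Noetherian local ring, B a commutative R-algebra, and x₁, …, x_d ∈ m elements whose images in B form a B-regular sequence. If the ideal (x₁, …, x_d)R is contracted from B, i.e. (x₁, …, x_d)R equals the preimage in R of the extended ideal (x₁, …, x_d)B, then for every i ≤ d the ideal (x₁, …, x_i)R is contracted from B as well. -/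
private lemma take_ofFn_set {R : Type*} [CommRing R] (d i : ℕ) (hi : i ≤ d) (x : Fin d → R) :
    {r | r ∈ (List.ofFn x).take i} = Set.range (fun j : Fin i => x (Fin.castLE hi j)) := by
  ext r
  simp only [Set.mem_setOf_eq, Set.mem_range, List.mem_iff_getElem]
  constructor
  · rintro ⟨k, hk, rfl⟩
    have hk' : k < i := by
      have := hk; rw [List.length_take, List.length_ofFn] at this; omega
    refine ⟨⟨k, hk'⟩, ?_⟩
    rw [List.getElem_take, List.getElem_ofFn]; rfl
  · rintro ⟨j, rfl⟩
    have hj : j.1 < (List.take i (List.ofFn x)).length := by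
      rw [List.length_take, List.length_ofFn]; omega
    refine ⟨j.1, hj, ?_⟩
    rw [List.getElem_take, List.getElem_ofFn]; rfl

/-- key step: regularity gives cancellation mod the extended ideal -/
private lemma reg_cancel {R B : Type*} [CommRing R] [CommRing B] [Algebra R B]
    (d : ℕ) (x : Fin d → R)
    (hreg : RingTheory.Sequence.IsWeaklyRegular B ((List.ofFn x).map (algebraMap R B)))
    (i : ℕ) (hi : i < d) (c : B)
    (h : c * algebraMap R B (x ⟨i, hi⟩) ∈
      Ideal.map (algebraMap R B)
        (Ideal.span (Set.range fun j : Fin i => x (Fin.castLE hi.le j)))) :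
    c ∈ Ideal.map (algebraMap R B)
        (Ideal.span (Set.range fun j : Fin i => x (Fin.castLE hi.le j))) := by
  set f := algebraMap R B
  set rs := (List.ofFn x).map f with hrs
  have hlen : rs.length = d := by simp [hrs]
  have hi' : i < rs.length := by omega
  have hsr := hreg.regular_mod_prev i hi'
  have htake : Ideal.ofList (rs.take i) =
      Ideal.map f (Ideal.span (Set.range fun j : Fin i => x (Fin.castLE hi.le j))) := by
    rw [hrs, ← List.map_take, ← Ideal.map_ofList]
    congr 1
    rw [Ideal.ofList, take_ofFn_set d i hi.le x]
  have hget : rs[i] = f (x ⟨i, hi⟩) := by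
    simp [hrs]
  rw [htake, hget] at hsr
  set K := Ideal.map f (Ideal.span (Set.range fun j : Fin i => x (Fin.castLE hi.le j)))
  -- work in quotient
  have hKtop : ∀ b : B, b ∈ (K • ⊤ : Submodule B B) ↔ b ∈ K := by
    intro b
    constructor
    · intro hb
      have : (K • ⊤ : Submodule B B) ≤ K := Submodule.smul_le.2 fun a ha b _ => by
        simpa [smul_eq_mul] using K.mul_mem_right b ha
      exact this hb
    · intro hb
      simpa using Submodule.smul_mem_smul hb (Submodule.mem_top (x := (1:B)))
  have h0 : f (x ⟨i, hi⟩) • (Submodule.Quotient.mk c : B ⧸ (K • ⊤ : Submodule B B)) =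
      f (x ⟨i, hi⟩) • (0 : B ⧸ (K • ⊤ : Submodule B B)) := by
    rw [smul_zero, ← Submodule.Quotient.mk_smul, Submodule.Quotient.mk_eq_zero]
    exact (hKtop _).2 (by rw [smul_eq_mul]; rwa [mul_comm] at h)
  have := hsr h0
  rw [Submodule.Quotient.mk_eq_zero] at this
  exact (hKtop c).1 this

/-- If the images of `x 1, …, x d ∈ m` form a `B`-regular sequence and the ideal
`(x 1, …, x d) R` is contracted from `B`, then so is each `(x 1, …, x i) R`. -/
theorem stmt_8 {R B : Type*} [CommRing R] [IsLocalRing R] [IsNoetherianRing R]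
    [CommRing B] [Algebra R B] (d : ℕ) (x : Fin d → R)
    (hx : ∀ i, x i ∈ IsLocalRing.maximalIdeal R)
    (hreg : RingTheory.Sequence.IsRegular B ((List.ofFn x).map (algebraMap R B)))
    (hcontr : Ideal.span (Set.range x) =
      Ideal.comap (algebraMap R B)
        (Ideal.map (algebraMap R B) (Ideal.span (Set.range x)))) :
    ∀ (i : ℕ) (hi : i ≤ d),
      Ideal.span (Set.range fun j : Fin i => x (Fin.castLE hi j)) =
        Ideal.comap (algebraMap R B)
          (Ideal.map (algebraMap R B)
            (Ideal.span (Set.range fun j : Fin i => x (Fin.castLE hi j)))) := by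
  set f := algebraMap R B
  -- downward induction on d - i
  suffices H : ∀ n i (hi : i ≤ d), d - i ≤ n →
      Ideal.span (Set.range fun j : Fin i => x (Fin.castLE hi j)) =
        Ideal.comap f (Ideal.map f
          (Ideal.span (Set.range fun j : Fin i => x (Fin.castLE hi j)))) by
    intro i hi; exact H (d - i) i hi le_rfl
  intro n
  induction n with
  | zero =>
    intro i hi hn
    have : i = d := by omega
    subst this
    have : (fun j : Fin i => x (Fin.castLE hi j)) = x := by
      funext j; congr 1
    rw [this]; exact hcontr
  | succ n ih =>
    intro i hi hn
    rcases eq_or_lt_of_le hi with rfl | hlt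
    · have : (fun j : Fin i => x (Fin.castLE hi j)) = x := by
        funext j; congr 1
      rw [this]; exact hcontr
    · -- i < d
      have hi1 : i + 1 ≤ d := hlt
      have h1 := ih (i + 1) hi1 (by omega)
      set I : Ideal R := Ideal.span (Set.range fun j : Fin i => x (Fin.castLE hi j)) with hI
      set I' : Ideal R :=
        Ideal.span (Set.range fun j : Fin (i+1) => x (Fin.castLE hi1 j)) with hI'
      set J : Ideal R := Ideal.comap f (Ideal.map f I) with hJ
      have hIJ : I ≤ J := Ideal.le_comap_map
      -- I' = span {x_i} ⊔ I
      have hI'eq : I' = Ideal.span {x ⟨i, hlt⟩} ⊔ I := by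
        rw [hI', hI, ← Ideal.span_insert]
        congr 1
        ext r
        simp only [Set.mem_insert_iff, Set.mem_range]
        constructor
        · rintro ⟨j, rfl⟩
          rcases eq_or_lt_of_le (Nat.lt_succ_iff.1 j.2) with hj | hj
          · left; congr 1; exact Fin.ext hj
          · right; exact ⟨⟨j.1, hj⟩, rfl⟩
        · rintro (rfl | ⟨j, rfl⟩)
          · exact ⟨⟨i, Nat.lt_succ_self i⟩, rfl⟩
          · exact ⟨⟨j.1, Nat.lt_succ_of_lt j.2⟩, rfl⟩
      -- J ≤ I ⊔ m • J
      have key : J ≤ I ⊔ (IsLocalRing.maximalIdeal R) • J := by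
        intro r hr
        have hrI' : r ∈ I' := by
          rw [h1]
          exact Ideal.comap_mono (Ideal.map_mono (by rw [hI'eq]; exact le_sup_right)) hr
        rw [hI'eq, sup_comm] at hrI'
        obtain ⟨b, hb, a, ha, rfl⟩ := Submodule.mem_sup.1 hrI'
        obtain ⟨c, rfl⟩ := Ideal.mem_span_singleton'.1 ha
        -- f c * f x_i ∈ map f I
        have hfb : f b ∈ Ideal.map f I := Ideal.mem_map_of_mem f hb
        have hsum : f (b + c * x ⟨i, hlt⟩) ∈ Ideal.map f I := hr
        have hcx : f c * f (x ⟨i, hlt⟩) ∈ Ideal.map f I := by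
          have : f (b + c * x ⟨i, hlt⟩) - f b ∈ Ideal.map f I :=
            Ideal.sub_mem _ hsum hfb
          rwa [map_add, add_sub_cancel_left, map_mul] at this
        have hcJ : c ∈ J := by
          rw [hJ, Ideal.mem_comap]
          exact reg_cancel d x hreg.toIsWeaklyRegular i hlt (f c) hcx
        apply Submodule.add_mem_sup hb
        have : c * x ⟨i, hlt⟩ = x ⟨i, hlt⟩ • c := by rw [smul_eq_mul, mul_comm]
        rw [this]
        exact Submodule.smul_mem_smul (hx _) hcJ
      have hJI : J ≤ I :=
        Submodule.le_of_le_smul_of_le_jacobson_bot (IsNoetherian.noetherian J)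
          (by rw [IsLocalRing.jacobson_eq_maximalIdeal ⊥ bot_ne_top]) key
      exact le_antisymm hIJ hJI
end

section
/- Let (R, m) be a Noetherian local ring, B a commutative R-algebra, and x₁, …, x_d ∈ m elements whose images in B form a B-regular sequence. If the ideal (x₁, …, x_d)R is contracted from B, then x₁, …, x_d is an R-regular sequence; in particular, if x₁, …, x_d is a system of parameters of R, then R is Cohen–Macaulay. -/
/-!
Write `Iᵢ = (x₁, …, xᵢ)`. By descending induction on `i`, each `Iᵢ` is contracted from `B`:
if `r ∈ IᵢB ∩ R`, then `r ∈ Iᵢ₊₁ = Iᵢ + xᵢ₊₁R`, say `r = s + c xᵢ₊₁`, and regularity of `xᵢ₊₁`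
on `B/IᵢB` puts `c` in `IᵢB ∩ R`. Hence `IᵢB ∩ R ⊆ Iᵢ + xᵢ₊₁ (IᵢB ∩ R)`, and Nakayama gives
`IᵢB ∩ R ⊆ Iᵢ`. Since `Iᵢ` is contracted, regularity of `xᵢ₊₁` on `B/IᵢB` descends to `R/Iᵢ`.
-/

open Ideal RingTheory.Sequence

namespace Ideal

variable {R B : Type*} [CommRing R] [CommRing B]

lemma isSMulRegular_quotient_smul_top_iff (I : Ideal R) (r : R) :
    IsSMulRegular (R ⧸ (I • ⊤ : Submodule R R)) r ↔ ∀ a, r * a ∈ I → a ∈ I := by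
  rw [smul_eq_mul, mul_top]
  exact isSMulRegular_quotient_iff_mem_of_smul_mem _ r

lemma comap_map_le_of_comap_map_sup_span_le [IsNoetherianRing R] (f : R →+* B) {I : Ideal R}
    {r : R} (hr : r ∈ jacobson ⊥) (hreg : ∀ b, f r * b ∈ I.map f → b ∈ I.map f)
    (hcontr : ((I ⊔ span {r}).map f).comap f ≤ I ⊔ span {r}) :
    (I.map f).comap f ≤ I := by
  set J := (I.map f).comap f
  refine Submodule.le_of_le_smul_of_le_jacobson_bot (IsNoetherian.noetherian J)
    (span_singleton_le_iff_mem _ |>.mpr hr) fun a ha ↦ ?_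
  obtain ⟨s, hs, t, ht, rfl⟩ :=
    Submodule.mem_sup.mp (hcontr (comap_mono (map_mono le_sup_left) ha))
  obtain ⟨c, rfl⟩ := mem_span_singleton'.mp ht
  have hc : c ∈ J := by
    refine hreg (f c) ?_
    have : f r * f c = f (s + c * r) - f s := by rw [map_add, map_mul]; ring
    exact this ▸ sub_mem ha (mem_map_of_mem f hs)
  have hcr : c * r ∈ span {r} • J := by
    simpa [mul_comm] using mul_mem_mul (mem_span_singleton_self r) hc
  exact Submodule.mem_sup.mpr ⟨s, hs, c * r, hcr, rfl⟩

end Ideal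

namespace RingTheory.Sequence

variable {R B : Type*} [CommRing R] [CommRing B]

lemma isWeaklyRegular_self_iff (rs : List R) :
    IsWeaklyRegular R rs ↔ ∀ i (h : i < rs.length) (a : R),
      rs[i] * a ∈ ofList (rs.take i) → a ∈ ofList (rs.take i) := by
  simp only [isWeaklyRegular_iff, isSMulRegular_quotient_smul_top_iff]

lemma isWeaklyRegular_map_iff (f : R →+* B) (rs : List R) :
    IsWeaklyRegular B (rs.map f) ↔ ∀ i (h : i < rs.length) (a : B),
      f rs[i] * a ∈ (ofList (rs.take i)).map f → a ∈ (ofList (rs.take i)).map f := by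
  simp [isWeaklyRegular_self_iff, List.map_take]

variable [IsNoetherianRing R] (f : R →+* B) {rs : List R}

lemma comap_map_ofList_take_le (hrs : ∀ r ∈ rs, r ∈ jacobson ⊥)
    (hreg : IsWeaklyRegular B (rs.map f)) (hcontr : ((ofList rs).map f).comap f ≤ ofList rs)
    {i : ℕ} (hi : i ≤ rs.length) :
    ((ofList (rs.take i)).map f).comap f ≤ ofList (rs.take i) := by
  induction hi using Nat.decreasingInduction with
  | self => rwa [List.take_length]
  | of_succ i hi ih =>
    rw [List.take_add_one, List.getElem?_eq_getElem hi, Option.toList_some, ofList_append,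
      ofList_singleton] at ih
    exact comap_map_le_of_comap_map_sup_span_le f (hrs _ (List.getElem_mem hi))
      ((isWeaklyRegular_map_iff f rs).mp hreg i hi) ih

theorem isWeaklyRegular_of_map_of_comap_map_le (hrs : ∀ r ∈ rs, r ∈ jacobson ⊥)
    (hreg : IsWeaklyRegular B (rs.map f)) (hcontr : ((ofList rs).map f).comap f ≤ ofList rs) :
    IsWeaklyRegular R rs := by
  refine (isWeaklyRegular_self_iff rs).mpr fun i hi a ha ↦ ?_
  refine comap_map_ofList_take_le f hrs hreg hcontr hi.le ?_
  refine (isWeaklyRegular_map_iff f rs).mp hreg i hi (f a) ?_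
  simpa using mem_map_of_mem f ha

end RingTheory.Sequence

/-- If the images of `x 1, …, x d ∈ m` form a `B`-regular sequence and
`(x 1, …, x d) R` is contracted from `B`, then `x 1, …, x d` is an `R`-regular
sequence; in particular, if `x` is a system of parameters of `R`, then `R` is
Cohen–Macaulay (it admits a system of parameters which is a regular sequence). -/
theorem stmt_9 {R B : Type*} [CommRing R] [IsLocalRing R] [IsNoetherianRing R]
    [CommRing B] [Algebra R B] (d : ℕ) (x : Fin d → R)
    (hx : ∀ i, x i ∈ IsLocalRing.maximalIdeal R)
    (hreg : RingTheory.Sequence.IsRegular B ((List.ofFn x).map (algebraMap R B)))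
    (hcontr : Ideal.span (Set.range x) =
      Ideal.comap (algebraMap R B)
        (Ideal.map (algebraMap R B) (Ideal.span (Set.range x)))) :
    RingTheory.Sequence.IsRegular R (List.ofFn x) ∧
      ((∃ k : ℕ, IsLocalRing.maximalIdeal R ^ k ≤ Ideal.span (Set.range x)) ∧
          ringKrullDim R = (d : WithBot (WithTop ℕ)) →
        ∃ (e : ℕ) (y : Fin e → R), (∀ i, y i ∈ IsLocalRing.maximalIdeal R) ∧
          (∃ k : ℕ, IsLocalRing.maximalIdeal R ^ k ≤ Ideal.span (Set.range y)) ∧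
          ringKrullDim R = (e : WithBot (WithTop ℕ)) ∧
          RingTheory.Sequence.IsRegular R (List.ofFn y)) := by
  have hxm : ∀ r ∈ List.ofFn x, r ∈ IsLocalRing.maximalIdeal R := by
    simpa [List.mem_ofFn] using hx
  have hspan : ofList (List.ofFn x) = span (Set.range x) := by
    simp only [ofList, List.mem_ofFn]; rfl
  have hRreg : IsRegular R (List.ofFn x) := by
    refine (IsLocalRing.isRegular_iff_isWeaklyRegular_of_subset_maximalIdeal hxm).mpr ?_
    refine isWeaklyRegular_of_map_of_comap_map_le (algebraMap R B)
      (fun r hr ↦ IsLocalRing.maximalIdeal_le_jacobson _ (hxm r hr)) hreg.toIsWeaklyRegular ?_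
    rw [hspan]
    exact hcontr.ge
  exact ⟨hRreg, fun ⟨hk, hdim⟩ ↦ ⟨d, x, hx, hk, hdim, hRreg⟩⟩
end

section
/- Asymptotic negative answer to Hochster's solid closure question: for every prime number p and every natural number r there exists a bound N = N(p, r) with the following property. Let V be a discrete valuation ring of characteristic zero with uniformizing parameter π whose residue field has characteristic p, and suppose p ∈ π^N V. Let R := V[[X, Y]] be the power series ring in two variables over V, with maximal ideal m = (π, X, Y)R. Then for every commutative R-algebra T admitting an R-linear map φ : T → R with φ(1) ∉ m^r, the element π²X²Y² does not lie in the ideal (π³, X³, Y³)·T. -/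
/-!
Put `q = p ^ r` and `z = π²X²Y²`, and suppose `z = a π³ + b X³ + c Y³` in `T`. Since
`(u + v) ^ q ≡ u ^ q + v ^ q` modulo `p`, raising to the `q`-th power gives
`z ^ q ∈ (π^{3q}, X^{3q}, Y^{3q}) T + p T`, and `p T` is absorbed because `π ^ {3q} ∣ p`.
Applying `φ` yields `z ^ q φ(1) ∈ (π^{3q}, X^{3q}, Y^{3q})` in `R`. Reading off the
coefficients of `X^{2q+i} Y^{2q+j}` with `i, j < q` and cancelling `π^{2q}` shows
`φ(1) ∈ (π^q, X^q, Y^q) ⊆ m^q ⊆ m^r`. Hence `N = 3 p^r` works.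
-/

namespace Ideal

theorem pow_prime_pow_mem_span_image_pow_sup {T : Type*} [CommRing T] {p : ℕ}
    (hp : p.Prime) (n : ℕ) {s : Set T} {x : T} (hx : x ∈ span s) :
    x ^ p ^ n ∈ span ((· ^ p ^ n) '' s) ⊔ span {(p : T)} := by
  induction hx using Submodule.span_induction with
  | mem y hy => exact mem_sup_left (subset_span ⟨y, hy, rfl⟩)
  | zero => rw [zero_pow (pow_ne_zero n hp.ne_zero)]; exact zero_mem _
  | add y z _ _ hy hz =>
    obtain ⟨d, hd⟩ := exists_add_pow_prime_pow_eq hp y z n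
    rw [hd]
    exact add_mem (add_mem hy hz)
      (mem_sup_right (mul_mem_right _ _ (mul_mem_right _ _
        (mul_mem_right _ _ (mem_span_singleton_self _)))))
  | smul c y _ hy =>
    rw [smul_eq_mul, mul_pow]
    exact mul_mem_left _ _ hy

theorem pow_prime_pow_mem_map_span_image_pow {R T : Type*} [CommRing R] [CommRing T]
    (f : R →+* T) {p : ℕ} (hp : p.Prime) (n : ℕ) {s : Set R}
    (hps : (p : R) ∈ span ((· ^ p ^ n) '' s)) {x : T}
    (hx : x ∈ (span s).map f) :
    x ^ p ^ n ∈ (span ((· ^ p ^ n) '' s)).map f := by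
  rw [map_span] at hx ⊢
  have hp' : span {(p : T)} ≤ span (f '' ((· ^ p ^ n) '' s)) := by
    rw [span_singleton_le_iff_mem, ← map_natCast f, ← map_span]
    exact mem_map_of_mem f hps
  have himage : (· ^ p ^ n) '' (f '' s) = f '' ((· ^ p ^ n) '' s) := by
    simp only [Set.image_image, map_pow]
  simpa only [himage, sup_eq_left.mpr hp'] using
    pow_prime_pow_mem_span_image_pow_sup hp n hx

end Ideal

theorem LinearMap.apply_mem_of_mem_map_algebraMap {R T : Type*} [CommRing R] [CommRing T]
    [Algebra R T] (φ : T →ₗ[R] R) {I : Ideal R} {x : T}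
    (hx : x ∈ I.map (algebraMap R T)) : φ x ∈ I := by
  have : (I • (⊤ : Submodule R T)).map φ ≤ I := by
    rw [Submodule.map_smul'']
    exact Submodule.smul_le.2 fun r hr _ _ => I.mul_mem_right _ hr
  exact this ⟨x, by rwa [Ideal.smul_top_eq_map], rfl⟩

namespace MvPowerSeries

variable {V : Type*} [CommRing V]

theorem C_dvd_of_forall_dvd_coeff {σ : Type*} {c : V} {g : MvPowerSeries σ V}
    (h : ∀ e, c ∣ coeff e g) : C c ∣ g := by
  obtain ⟨a, ha⟩ : ∃ a : MvPowerSeries σ V, ∀ e, coeff e g = c * coeff e a :=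
    ⟨fun e => (h e).choose, fun e => (h e).choose_spec⟩
  exact ⟨a, ext fun e => by rw [coeff_C_mul, ha]⟩

theorem mem_span_C_X_pow_iff {c : V} {k : ℕ} {g : MvPowerSeries (Fin 2) V} :
    g ∈ Ideal.span {C c, X 0 ^ k, X 1 ^ k} ↔
      ∀ e : Fin 2 →₀ ℕ, e 0 < k → e 1 < k → c ∣ coeff e g := by
  constructor
  · intro hg e he0 he1
    obtain ⟨u, v, w, rfl⟩ := Submodule.mem_span_triple.mp hg
    have hX : ∀ i : Fin 2, e i < k → ∀ y : MvPowerSeries (Fin 2) V,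
        coeff e (y * X i ^ k) = 0 :=
      fun i hi y => X_pow_dvd_iff.mp (dvd_mul_left _ _) e hi
    simp only [smul_eq_mul, map_add, hX 0 he0, hX 1 he1, add_zero, mul_comm u, coeff_C_mul]
    exact dvd_mul_right _ _
  · intro h
    classical
    let g₀ : MvPowerSeries (Fin 2) V := fun e => if k ≤ e 0 then coeff e g else 0
    let g₁ : MvPowerSeries (Fin 2) V := fun e => if e 0 < k ∧ k ≤ e 1 then coeff e g else 0
    let g₂ : MvPowerSeries (Fin 2) V := fun e => if e 0 < k ∧ e 1 < k then coeff e g else 0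
    have hg : g = g₂ + g₀ + g₁ := by
      ext e
      rw [map_add, map_add, coeff_apply g₀, coeff_apply g₁, coeff_apply g₂]
      dsimp only [g₀, g₁, g₂]
      split_ifs <;> first | omega | simp
    have h₀ : X 0 ^ k ∣ g₀ := X_pow_dvd_iff.mpr fun e he => if_neg (by omega)
    have h₁ : X 1 ^ k ∣ g₁ := X_pow_dvd_iff.mpr fun e he => if_neg (by omega)
    have h₂ : C c ∣ g₂ := C_dvd_of_forall_dvd_coeff fun e => by
      show c ∣ ite _ _ _
      split_ifs with he
      exacts [h e he.1 he.2, dvd_zero c]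
    rw [hg]
    refine Ideal.add_mem _ (Ideal.add_mem _ ?_ ?_) ?_
    exacts [Ideal.mem_of_dvd _ h₂ (Ideal.subset_span (by simp)),
      Ideal.mem_of_dvd _ h₀ (Ideal.subset_span (by simp)),
      Ideal.mem_of_dvd _ h₁ (Ideal.subset_span (by simp))]

theorem C_pow_mul_X_pow_mul_X_pow (π : V) (a : ℕ) :
    (C π ^ a * X 0 ^ a * X 1 ^ a : MvPowerSeries (Fin 2) V) =
      monomial (Finsupp.single 0 a + Finsupp.single 1 a) (π ^ a) := by
  rw [← map_pow, ← monomial_zero_eq_C_apply, X_pow_eq, X_pow_eq, monomial_mul_monomial,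
    monomial_mul_monomial, mul_one, mul_one, zero_add]

theorem mem_span_C_X_pow_of_mul_mem [IsDomain V] {π : V} (hπ : π ≠ 0) {a b : ℕ}
    {g : MvPowerSeries (Fin 2) V}
    (h : C π ^ a * X 0 ^ a * X 1 ^ a * g ∈
      Ideal.span {C π ^ (a + b), X 0 ^ (a + b), X 1 ^ (a + b)}) :
    g ∈ Ideal.span {C π ^ b, X 0 ^ b, X 1 ^ b} := by
  rw [← map_pow, mem_span_C_X_pow_iff] at h ⊢
  intro e he0 he1
  have hD := h (Finsupp.single 0 a + Finsupp.single 1 a + e) (by simpa using he0)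
    (by simpa using he1)
  rwa [C_pow_mul_X_pow_mul_X_pow, coeff_add_monomial_mul, pow_add,
    mul_dvd_mul_iff_left (pow_ne_zero a hπ)] at hD

theorem span_C_X_pow_le_pow (π : V) (k : ℕ) :
    Ideal.span {C π ^ k, X 0 ^ k, X 1 ^ k} ≤
      (Ideal.span {C π, X 0, X 1} : Ideal (MvPowerSeries (Fin 2) V)) ^ k := by
  rw [Ideal.span_le]
  rintro x (rfl | rfl | rfl) <;> exact Ideal.pow_mem_pow (Ideal.subset_span (by simp)) k

end MvPowerSeries

open MvPowerSeries

/-- Asymptotic negative answer to Hochster's question: for fixed `(p, r)` there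
is a bound `N` such that for any mixed characteristic complete DVR-style
situation `R = V[[X, Y]]` with `p ∈ π ^ N V`, the element `π² X² Y²` does not
lie in `(π³, X³, Y³) · T` for any `R`-algebra `T` admitting an `R`-linear map
`φ : T → R` with `φ 1 ∉ m ^ r`. -/
theorem stmt_12 (p : ℕ) (hp : p.Prime) (r : ℕ) :
    ∃ N : ℕ, ∀ (V : Type u) [CommRing V] [IsDomain V] [IsDiscreteValuationRing V]
      [CharZero V] [CharP (IsLocalRing.ResidueField V) p],
      ∀ π : V, IsLocalRing.maximalIdeal V = Ideal.span {π} →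
      π ^ N ∣ (p : V) →
      ∀ (T : Type u) [CommRing T] [Algebra (MvPowerSeries (Fin 2) V) T],
      ∀ φ : T →ₗ[MvPowerSeries (Fin 2) V] MvPowerSeries (Fin 2) V,
      φ 1 ∉ (Ideal.span {(MvPowerSeries.C π : MvPowerSeries (Fin 2) V),
        (MvPowerSeries.X 0 : MvPowerSeries (Fin 2) V), MvPowerSeries.X 1}) ^ r →
      algebraMap (MvPowerSeries (Fin 2) V) T
          ((MvPowerSeries.C π : MvPowerSeries (Fin 2) V) ^ 2 *
            (MvPowerSeries.X 0 : MvPowerSeries (Fin 2) V) ^ 2 *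
            MvPowerSeries.X 1 ^ 2) ∉
        Ideal.map (algebraMap (MvPowerSeries (Fin 2) V) T)
          (Ideal.span {(MvPowerSeries.C π : MvPowerSeries (Fin 2) V) ^ 3,
            (MvPowerSeries.X 0 : MvPowerSeries (Fin 2) V) ^ 3,
            MvPowerSeries.X 1 ^ 3}) := by
  refine ⟨3 * p ^ r, fun V _ _ _ _ _ π hπm hπp T _ _ φ hφ hmem => hφ ?_⟩
  set q := p ^ r
  set S : Set (MvPowerSeries (Fin 2) V) := {C π ^ 3, X 0 ^ 3, X 1 ^ 3}
  have hπ : π ≠ 0 := by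
    rintro rfl
    exact IsDiscreteValuationRing.not_a_field V (by rw [hπm, Ideal.span_singleton_eq_bot])
  have hS : (· ^ q) '' S = {C π ^ (2 * q + q), X 0 ^ (2 * q + q), X 1 ^ (2 * q + q)} := by
    simp only [S, Set.image_insert_eq, Set.image_singleton, ← pow_mul, ← add_one_mul]
    norm_num
  have hp_mem : (p : MvPowerSeries (Fin 2) V) ∈ Ideal.span ((· ^ q) '' S) := by
    obtain ⟨v, hv⟩ := hπp
    rw [hS, ← map_natCast C, hv, map_mul, map_pow, ← add_one_mul]
    exact Ideal.mul_mem_right _ _ (Ideal.subset_span (by simp))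
  have hzq : algebraMap _ T ((C π ^ 2 * X 0 ^ 2 * X 1 ^ 2 : MvPowerSeries (Fin 2) V) ^ q) ∈
      (Ideal.span ((· ^ q) '' S)).map (algebraMap _ T) := by
    rw [map_pow]
    exact Ideal.pow_prime_pow_mem_map_span_image_pow _ hp r hp_mem hmem
  have hφq := φ.apply_mem_of_mem_map_algebraMap hzq
  rw [Algebra.algebraMap_eq_smul_one, map_smul, smul_eq_mul, hS, mul_pow, mul_pow, ← pow_mul,
    ← pow_mul, ← pow_mul] at hφq
  have hφ1 : φ 1 ∈ Ideal.span {C π ^ q, X 0 ^ q, X 1 ^ q} :=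
    mem_span_C_X_pow_of_mul_mem hπ hφq
  exact Ideal.pow_le_pow_right (Nat.lt_pow_self hp.one_lt).le (span_C_X_pow_le_pow π q hφ1)
end
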